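/- The unique solution of the variational problem VP(r₀) is a constant function if and only if 1/r₀ has the form a + b cos θ + c sin θ for real constants a, b, c (with a > 0), i.e. if and only if r₀ is the radial function of an ellipse with one focus at the origin. -/

import Mathlib

/-!
If `1/r₀ = a + b cos θ + c sin θ`, the moment constraints reduce the objective to `a ∫ s³`, and
the pointwise inequality `(s - k)² (s + k/2) ≥ 0` shows that under `∫ s² = 2` this is minimal
exactly at the constant `k = π^(-1/2)`.

Conversely, if the constant `k` is the minimizer, perturb it to `s = c (1 - δ g)^(1/3)` with `g`
orthogonal to `1, cos, sin`: taking cubes keeps the moment constraints, renormalizing costs only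
`O(δ²)`, while the objective drops by `δ c³ ∫ g / r₀` to first order. Hence `∫ g / r₀ ≤ 0` for
every such `g`, and for `g` the component of `1/r₀` orthogonal to `1, cos, sin` this reads
`∫ g² ≤ 0`.
-/

open Real Set

/-- A feasible solution of the variational problem `VP(r₀)`. -/
def Feasible (s : ℝ → ℝ) : Prop :=
  ContinuousOn s (Icc 0 (2 * π)) ∧ (∀ t ∈ Icc (0 : ℝ) (2 * π), 0 < s t) ∧
  (1 / 2) * (∫ t in (0 : ℝ)..(2 * π), s t ^ 2) = 1 ∧
  (∫ t in (0 : ℝ)..(2 * π), s t ^ 3 * Real.cos t) = 0 ∧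
  (∫ t in (0 : ℝ)..(2 * π), s t ^ 3 * Real.sin t) = 0

/-- The starshaped set whose radial function is `r`. -/
def StarSet (r : ℝ → ℝ) : Set (ℝ × ℝ) :=
  {p | ∃ t ∈ Icc (0 : ℝ) (2 * π), ∃ ρ : ℝ, 0 ≤ ρ ∧ ρ ≤ r t ∧
    p = (ρ * Real.cos t, ρ * Real.sin t)}

open MeasureTheory (volume)
open intervalIntegral

lemma integral_congr_Icc {f g : ℝ → ℝ} {a b : ℝ} (hab : a ≤ b) (h : ∀ t ∈ Icc a b, f t = g t) :
    ∫ t in a..b, f t = ∫ t in a..b, g t :=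
  integral_congr fun t ht ↦ h t (uIcc_of_le hab ▸ ht)

lemma eq_zero_of_integral_nonpos {F : ℝ → ℝ} {a b : ℝ} (hab : a < b)
    (hF : ContinuousOn F (Icc a b)) (hF0 : ∀ t ∈ Icc a b, 0 ≤ F t)
    (hint : ∫ t in a..b, F t ≤ 0) : ∀ t ∈ Icc a b, F t = 0 := by
  intro t ht
  by_contra hne
  have := integral_pos hab hF (fun x hx ↦ hF0 x (Ioc_subset_Icc_self hx))
    ⟨t, ht, (hF0 t ht).lt_of_ne' hne⟩
  linarith

lemma integral_mul_trigPoly {h : ℝ → ℝ} {a b : ℝ} (hh : IntervalIntegrable h volume a b)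
    (p q r : ℝ) :
    ∫ t in a..b, h t * (p + q * cos t + r * sin t) =
      p * (∫ t in a..b, h t) + q * (∫ t in a..b, h t * cos t) +
        r * ∫ t in a..b, h t * sin t := by
  have hc := hh.mul_continuousOn continuous_cos.continuousOn
  have hs := hh.mul_continuousOn continuous_sin.continuousOn
  rw [← integral_const_mul, ← integral_const_mul, ← integral_const_mul,
    ← integral_add (hh.const_mul p) (hc.const_mul q),
    ← integral_add ((hh.const_mul p).add (hc.const_mul q)) (hs.const_mul r)]
  congr 1 with t
  ring

lemma integral_trigPoly (p q r : ℝ) :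
    ∫ t in 0..2 * π, (p + q * cos t + r * sin t) = 2 * π * p := by
  have := integral_mul_trigPoly (h := fun _ ↦ (1 : ℝ)) (a := 0) (b := 2 * π)
    intervalIntegrable_const p q r
  simp only [one_mul] at this
  simp [this, integral_cos, integral_sin]
  ring

lemma integral_trigPoly_mul_cos (p q r : ℝ) :
    ∫ t in 0..2 * π, (p + q * cos t + r * sin t) * cos t = π * q := by
  have := integral_mul_trigPoly (continuous_cos.intervalIntegrable 0 (2 * π)) p q r
  simp only [mul_comm (cos _) (_ + _)] at this
  rw [this]
  simp [← sq, integral_cos_sq, mul_comm (cos _), integral_sin_mul_cos₁, integral_cos]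
  ring

lemma integral_trigPoly_mul_sin (p q r : ℝ) :
    ∫ t in 0..2 * π, (p + q * cos t + r * sin t) * sin t = π * r := by
  have := integral_mul_trigPoly (continuous_sin.intervalIntegrable 0 (2 * π)) p q r
  simp only [mul_comm (sin _) (_ + _)] at this
  rw [this]
  simp [← sq, integral_sin_sq, integral_sin_mul_cos₁, integral_sin]
  ring

lemma exists_sub_trigPoly_orthogonal {f : ℝ → ℝ} (hf : IntervalIntegrable f volume 0 (2 * π)) :
    ∃ a b c : ℝ,
      ∫ t in 0..2 * π, (f t - (a + b * cos t + c * sin t)) = 0 ∧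
      ∫ t in 0..2 * π, (f t - (a + b * cos t + c * sin t)) * cos t = 0 ∧
      ∫ t in 0..2 * π, (f t - (a + b * cos t + c * sin t)) * sin t = 0 := by
  have hP : ∀ a b c : ℝ, IntervalIntegrable (fun t ↦ a + b * cos t + c * sin t) volume 0 (2 * π) :=
    fun a b c ↦ (by fun_prop : Continuous _).intervalIntegrable _ _
  refine ⟨(∫ t in 0..2 * π, f t) / (2 * π), (∫ t in 0..2 * π, f t * cos t) / π,
    (∫ t in 0..2 * π, f t * sin t) / π, ?_, ?_, ?_⟩
  · rw [integral_sub hf (hP ..), integral_trigPoly]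
    field_simp
    ring
  · simp only [sub_mul]
    rw [integral_sub (hf.mul_continuousOn continuous_cos.continuousOn)
      ((hP ..).mul_continuousOn continuous_cos.continuousOn), integral_trigPoly_mul_cos]
    field_simp
    ring
  · simp only [sub_mul]
    rw [integral_sub (hf.mul_continuousOn continuous_sin.continuousOn)
      ((hP ..).mul_continuousOn continuous_sin.continuousOn), integral_trigPoly_mul_sin]
    field_simp
    ring

lemma eq_const_of_integral_cube_le {s : ℝ → ℝ} {a b k : ℝ} (hab : a < b)
    (hs : ContinuousOn s (Icc a b)) (hs0 : ∀ t ∈ Icc a b, 0 ≤ s t) (hk : 0 < k)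
    (h2 : ∫ t in a..b, s t ^ 2 = (b - a) * k ^ 2) (h3 : ∫ t in a..b, s t ^ 3 ≤ (b - a) * k ^ 3) :
    ∀ t ∈ Icc a b, s t = k := by
  have hint : ∀ n : ℕ, IntervalIntegrable (fun t ↦ s t ^ n) volume a b := fun n ↦
    (hs.pow n).intervalIntegrable_of_Icc hab.le
  have hF : ∫ t in a..b, (s t - k) ^ 2 * (s t + k / 2) ≤ 0 := by
    calc ∫ t in a..b, (s t - k) ^ 2 * (s t + k / 2)
        = ∫ t in a..b, (s t ^ 3 - 3 / 2 * k * s t ^ 2 + k ^ 3 / 2) := by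
          congr 1 with t; ring
      _ = (∫ t in a..b, s t ^ 3) - 3 / 2 * k * (∫ t in a..b, s t ^ 2) +
            (b - a) * (k ^ 3 / 2) := by
          rw [integral_add ((hint 3).sub ((hint 2).const_mul _)) intervalIntegrable_const,
            integral_sub (hint 3) ((hint 2).const_mul _), integral_const_mul, integral_const,
            smul_eq_mul]
      _ ≤ 0 := by rw [h2]; nlinarith [pow_pos hk 3]
  intro t ht
  have hzero := eq_zero_of_integral_nonpos hab (by fun_prop)
    (fun t ht ↦ by have := hs0 t ht; positivity) hF t ht
  have : s t + k / 2 ≠ 0 := by linarith [hs0 t ht]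
  simpa [this, sub_eq_zero] using hzero

lemma feasible_const {k : ℝ} (hk : 0 < k) (hπk : π * k ^ 2 = 1) : Feasible fun _ ↦ k := by
  refine ⟨continuousOn_const, fun _ _ ↦ hk, ?_, ?_, ?_⟩
  · simp only [integral_const, smul_eq_mul]
    linear_combination hπk
  · simp [integral_const_mul, integral_cos]
  · simp [integral_const_mul, integral_sin]

lemma Feasible.pos_and_pi_mul_sq_of_eq_const {r : ℝ → ℝ} {k : ℝ} (hr : Feasible r)
    (hk : ∀ t ∈ Icc 0 (2 * π), r t = k) : 0 < k ∧ π * k ^ 2 = 1 := by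
  have h0 : (0 : ℝ) ∈ Icc 0 (2 * π) := ⟨le_rfl, two_pi_pos.le⟩
  refine ⟨hk 0 h0 ▸ hr.2.1 0 h0, ?_⟩
  have := hr.2.2.1
  rw [integral_congr_Icc two_pi_pos.le fun t ht ↦ by rw [hk t ht],
    integral_const, smul_eq_mul] at this
  linear_combination this

lemma Feasible.integral_mul_trigPoly {s : ℝ → ℝ} (hs : Feasible s) (p q r : ℝ) :
    ∫ t in 0..2 * π, s t ^ 3 * (p + q * cos t + r * sin t) = p * ∫ t in 0..2 * π, s t ^ 3 := by
  rw [_root_.integral_mul_trigPoly (h := fun t ↦ s t ^ 3)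
    ((hs.1.pow 3).intervalIntegrable_of_Icc two_pi_pos.le), hs.2.2.2.1, hs.2.2.2.2]
  ring

lemma exists_feasible_cube_eq_const_mul {w : ℝ → ℝ} (hw : ContinuousOn w (Icc 0 (2 * π)))
    (hw0 : ∀ t ∈ Icc 0 (2 * π), 0 < w t) (hcos : ∫ t in 0..2 * π, w t * cos t = 0)
    (hsin : ∫ t in 0..2 * π, w t * sin t = 0) :
    ∃ c > 0, c ^ 2 * ∫ t in 0..2 * π, w t ^ (2 / 3 : ℝ) = 2 ∧
      ∃ s, Feasible s ∧ ∀ t ∈ Icc 0 (2 * π), s t ^ 3 = c ^ 3 * w t := by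
  set I := ∫ t in 0..2 * π, w t ^ (2 / 3 : ℝ)
  have hI : 0 < I := intervalIntegral_pos_of_pos_on
    ((hw.rpow_const fun _ _ ↦ Or.inr (by norm_num)).intervalIntegrable_of_Icc two_pi_pos.le)
    (fun t ht ↦ rpow_pos_of_pos (hw0 t (Ioo_subset_Icc_self ht)) _) two_pi_pos
  set c := √(2 / I)
  have hc : 0 < c := sqrt_pos.2 (div_pos two_pos hI)
  have hcI : c ^ 2 * I = 2 := by
    rw [sq_sqrt (div_pos two_pos hI).le]
    field_simp
  have hpow : ∀ n : ℕ, ∀ t ∈ Icc 0 (2 * π),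
      (c * w t ^ (1 / 3 : ℝ)) ^ n = c ^ n * w t ^ (n / 3 : ℝ) := fun n t ht ↦ by
    rw [mul_pow, ← rpow_natCast (w t ^ _), ← rpow_mul (hw0 t ht).le, one_div_mul_eq_div]
  have hcube : ∀ t ∈ Icc 0 (2 * π), (c * w t ^ (1 / 3 : ℝ)) ^ 3 = c ^ 3 * w t := fun t ht ↦ by
    rw [hpow 3 t ht]
    norm_num
  have hmoment : ∀ h : ℝ → ℝ, ∫ t in 0..2 * π, w t * h t = 0 →
      ∫ t in 0..2 * π, (c * w t ^ (1 / 3 : ℝ)) ^ 3 * h t = 0 := fun h hh ↦ by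
    rw [integral_congr_Icc two_pi_pos.le fun t ht ↦ by rw [hcube t ht, mul_assoc],
      integral_const_mul, hh, mul_zero]
  refine ⟨c, hc, hcI, fun t ↦ c * w t ^ (1 / 3 : ℝ), ⟨?_, ?_, ?_, hmoment _ hcos,
    hmoment _ hsin⟩, hcube⟩
  · exact continuousOn_const.mul (hw.rpow_const fun _ _ ↦ Or.inr (by norm_num))
  · exact fun t ht ↦ mul_pos hc (rpow_pos_of_pos (hw0 t ht) _)
  · rw [integral_congr_Icc two_pi_pos.le (hpow 2), integral_const_mul]
    change 1 / 2 * (c ^ 2 * I) = 1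
    rw [hcI]
    norm_num

lemma one_add_two_thirds_mul_sub_sq_le_rpow {x : ℝ} (hx : |x| ≤ 1 / 2) :
    1 + 2 / 3 * x - x ^ 2 ≤ (1 + x) ^ (2 / 3 : ℝ) := by
  obtain ⟨hx₁, hx₂⟩ := abs_le.1 hx
  have hy0 : 0 ≤ 1 + 2 / 3 * x - x ^ 2 := by nlinarith
  have hcube : (1 + 2 / 3 * x - x ^ 2) ^ 3 ≤ (1 + x) ^ 2 := by
    nlinarith [sq_nonneg x, sq_nonneg (x * (1 + x)), sq_nonneg (x ^ 2), sq_nonneg (x ^ 3),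
      sq_nonneg (x ^ 2 * (1 - 2 * x)), sq_nonneg (x ^ 2 * (1 + 2 * x))]
  calc 1 + 2 / 3 * x - x ^ 2 = ((1 + 2 / 3 * x - x ^ 2) ^ 3) ^ (1 / 3 : ℝ) := by
        rw [← rpow_natCast _ 3, ← rpow_mul hy0]; norm_num
    _ ≤ ((1 + x) ^ 2) ^ (1 / 3 : ℝ) := by gcongr
    _ = (1 + x) ^ (2 / 3 : ℝ) := by
        rw [← rpow_natCast _ 2, ← rpow_mul (by linarith)]; norm_num

lemma two_pi_sub_le_integral_rpow {g : ℝ → ℝ} {δ : ℝ} (hg : ContinuousOn g (Icc 0 (2 * π)))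
    (hg1 : ∫ t in 0..2 * π, g t = 0) (hδg : ∀ t ∈ Icc 0 (2 * π), |δ * g t| ≤ 1 / 2) :
    2 * π - δ ^ 2 * ∫ t in 0..2 * π, g t ^ 2 ≤ ∫ t in 0..2 * π, (1 - δ * g t) ^ (2 / 3 : ℝ) := by
  have hgi := hg.intervalIntegrable_of_Icc (μ := volume) two_pi_pos.le
  have hg2i : IntervalIntegrable (fun t ↦ g t ^ 2) volume 0 (2 * π) :=
    (hg.pow 2).intervalIntegrable_of_Icc two_pi_pos.le
  have h1i : IntervalIntegrable (fun _ ↦ (1 : ℝ)) volume 0 (2 * π) := intervalIntegrable_const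
  calc 2 * π - δ ^ 2 * ∫ t in 0..2 * π, g t ^ 2
      = ∫ t in 0..2 * π, (1 - 2 / 3 * δ * g t - δ ^ 2 * g t ^ 2) := by
        rw [integral_sub (h1i.sub (hgi.const_mul _)) (hg2i.const_mul _),
          integral_sub h1i (hgi.const_mul _), integral_const_mul, integral_const_mul, hg1]
        simp
    _ ≤ ∫ t in 0..2 * π, (1 - δ * g t) ^ (2 / 3 : ℝ) := by
        refine integral_mono_on two_pi_pos.le
          ((h1i.sub (hgi.const_mul _)).sub (hg2i.const_mul _))
          (ContinuousOn.intervalIntegrable_of_Icc two_pi_pos.le ?_) fun t ht ↦ ?_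
        · exact (continuousOn_const.sub (continuousOn_const.mul hg)).rpow_const
            fun _ _ ↦ Or.inr (by norm_num)
        · have := one_add_two_thirds_mul_sub_sq_le_rpow (x := -(δ * g t))
            (by rw [abs_neg]; exact hδg t ht)
          rw [← sub_eq_add_neg] at this
          linarith

/-- With `A = ∫ f`, `B = ∫ g f`, `G = ∫ g²`, the perturbation `s³ = c³ (1 - δ g)` has objective
`c³ (A - δ B)`, and the normalization `c² ∫ (1 - δ g)^(2/3) = 2` only moves `c` away from `k` by
`O(δ²)`; so for small `δ` the first-order gain `δ B` wins. -/
lemma perturbed_objective_lt {A B G δ k c : ℝ} (hA : 0 < A) (hδ : 0 < δ)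
    (hδG : δ ^ 2 * G < 2 * π) (hδsmall : δ * (2 * π * B ^ 2 + 3 * A ^ 2 * G) < 4 * π * A * B)
    (hk : 0 < k) (hπk : π * k ^ 2 = 1) (hc : 0 < c) (hcI : c ^ 2 * (2 * π - δ ^ 2 * G) ≤ 2) :
    c ^ 3 * (A - δ * B) < k ^ 3 * A := by
  by_contra! h
  set x := δ ^ 2 * G
  have hAB : 0 < A - δ * B := pos_of_mul_pos_right ((by positivity : 0 < k ^ 3 * A).trans_le h)
    (by positivity)
  have hsq : (k ^ 3 * A) ^ 2 ≤ (c ^ 3 * (A - δ * B)) ^ 2 := pow_le_pow_left₀ (by positivity) h 2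
  have hk6 : π ^ 3 * (k ^ 3) ^ 2 = 1 := by linear_combination (π ^ 2 * k ^ 4 + π * k ^ 2 + 1) * hπk
  have hc6 : (c ^ 3) ^ 2 * (2 * π - x) ^ 3 ≤ 8 := by
    have := pow_le_pow_left₀ (by nlinarith) hcI 3
    linear_combination this
  have hcube : 8 * π ^ 3 - 12 * π ^ 2 * x ≤ (2 * π - x) ^ 3 := by
    nlinarith [mul_nonneg (sq_nonneg x) (by linarith [pi_pos] : 0 ≤ 6 * π - x)]
  have hmain : A ^ 2 * (8 * π ^ 3 - 12 * π ^ 2 * x) ≤ 8 * π ^ 3 * (A - δ * B) ^ 2 := by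
    have h2πx : 0 < 2 * π - x := by linarith
    calc A ^ 2 * (8 * π ^ 3 - 12 * π ^ 2 * x) ≤ A ^ 2 * (2 * π - x) ^ 3 := by gcongr
      _ = π ^ 3 * (k ^ 3 * A) ^ 2 * (2 * π - x) ^ 3 := by
        linear_combination (-(A ^ 2) * (2 * π - x) ^ 3) * hk6
      _ ≤ π ^ 3 * (c ^ 3 * (A - δ * B)) ^ 2 * (2 * π - x) ^ 3 := by gcongr
      _ = π ^ 3 * (A - δ * B) ^ 2 * ((c ^ 3) ^ 2 * (2 * π - x) ^ 3) := by ring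
      _ ≤ π ^ 3 * (A - δ * B) ^ 2 * 8 := by gcongr
      _ = 8 * π ^ 3 * (A - δ * B) ^ 2 := by ring
  have : 4 * π ^ 2 * δ * (4 * π * A * B) ≤
      4 * π ^ 2 * δ * (δ * (2 * π * B ^ 2 + 3 * A ^ 2 * G)) := by
    linear_combination hmain
  have := le_of_mul_le_mul_left this (by positivity)
  linarith

theorem integral_mul_nonpos_of_forall_feasible_le {f g : ℝ → ℝ} {k : ℝ}
    (hf : ContinuousOn f (Icc 0 (2 * π))) (hf0 : ∀ t ∈ Icc 0 (2 * π), 0 < f t)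
    (hk : 0 < k) (hπk : π * k ^ 2 = 1)
    (hmin : ∀ s, Feasible s → ∫ t in 0..2 * π, k ^ 3 * f t ≤ ∫ t in 0..2 * π, s t ^ 3 * f t)
    (hg : ContinuousOn g (Icc 0 (2 * π))) (hg1 : ∫ t in 0..2 * π, g t = 0)
    (hgcos : ∫ t in 0..2 * π, g t * cos t = 0) (hgsin : ∫ t in 0..2 * π, g t * sin t = 0) :
    ∫ t in 0..2 * π, g t * f t ≤ 0 := by
  by_contra! hB
  set A := ∫ t in 0..2 * π, f t
  set B := ∫ t in 0..2 * π, g t * f t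
  set G := ∫ t in 0..2 * π, g t ^ 2
  have hA : 0 < A := intervalIntegral_pos_of_pos_on (hf.intervalIntegrable_of_Icc two_pi_pos.le)
    (fun t ht ↦ hf0 t (Ioo_subset_Icc_self ht)) two_pi_pos
  obtain ⟨M, hM⟩ := isCompact_Icc.exists_bound_of_continuousOn hg
  obtain ⟨δ, hδ, hδM, hδG, hδsmall⟩ : ∃ δ : ℝ, 0 < δ ∧ δ * M < 1 / 2 ∧ δ ^ 2 * G < 2 * π ∧
      δ * (2 * π * B ^ 2 + 3 * A ^ 2 * G) < 4 * π * A * B := by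
    refine ((eventually_mem_nhdsWithin (a := (0 : ℝ)) (s := Ioi 0)).and
      (nhdsWithin_le_nhds ?_)).exists
    refine (ContinuousAt.eventually_lt (by fun_prop) continuousAt_const ?_).and
      ((ContinuousAt.eventually_lt (by fun_prop) continuousAt_const ?_).and
      (ContinuousAt.eventually_lt (by fun_prop) continuousAt_const ?_))
    all_goals simp only [zero_mul, ne_eq, OfNat.ofNat_ne_zero, not_false_eq_true, zero_pow]
    all_goals positivity
  have hδg : ∀ t ∈ Icc 0 (2 * π), |δ * g t| ≤ 1 / 2 := fun t ht ↦ by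
    rw [abs_mul, abs_of_pos hδ]
    nlinarith [norm_eq_abs (g t) ▸ hM t ht, abs_nonneg (g t)]
  have hlin : ∀ h : ℝ → ℝ, ContinuousOn h (Icc 0 (2 * π)) →
      ∫ t in 0..2 * π, (1 - δ * g t) * h t =
        (∫ t in 0..2 * π, h t) - δ * ∫ t in 0..2 * π, g t * h t := fun h hh ↦ by
    have hgh : IntervalIntegrable (fun t ↦ g t * h t) volume 0 (2 * π) :=
      (hg.mul hh).intervalIntegrable_of_Icc two_pi_pos.le
    rw [← integral_const_mul, ← integral_sub
      (hh.intervalIntegrable_of_Icc two_pi_pos.le) (hgh.const_mul δ)]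
    congr 1 with t
    ring
  obtain ⟨c, hc, hcI, s, hs, hs3⟩ := exists_feasible_cube_eq_const_mul (w := fun t ↦ 1 - δ * g t)
    (by fun_prop) (fun t ht ↦ by linarith [(abs_le.1 (hδg t ht)).2])
    (by rw [hlin _ continuous_cos.continuousOn, hgcos, integral_cos]; simp)
    (by rw [hlin _ continuous_sin.continuousOn, hgsin, integral_sin]; simp)
  have hobj : ∫ t in 0..2 * π, s t ^ 3 * f t = c ^ 3 * (A - δ * B) := by
    rw [integral_congr_Icc two_pi_pos.le fun t ht ↦ by rw [hs3 t ht, mul_assoc],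
      integral_const_mul, hlin f hf]
  have hcG : c ^ 2 * (2 * π - δ ^ 2 * G) ≤ 2 := calc
    _ ≤ c ^ 2 * ∫ t in 0..2 * π, (1 - δ * g t) ^ (2 / 3 : ℝ) := by
      gcongr
      exact two_pi_sub_le_integral_rpow hg hg1 hδg
    _ = 2 := hcI
  refine (perturbed_objective_lt hA hδ hδG hδsmall hk hπk hc hcG).not_ge ?_
  rw [← hobj, ← integral_const_mul]
  exact hmin s hs

theorem exists_eq_trigPoly_of_forall_orthogonal {f : ℝ → ℝ}
    (hf : ContinuousOn f (Icc 0 (2 * π)))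
    (h : ∀ g, ContinuousOn g (Icc 0 (2 * π)) → ∫ t in 0..2 * π, g t = 0 →
      ∫ t in 0..2 * π, g t * cos t = 0 → ∫ t in 0..2 * π, g t * sin t = 0 →
      ∫ t in 0..2 * π, g t * f t ≤ 0) :
    ∃ a b c : ℝ, ∀ t ∈ Icc 0 (2 * π), f t = a + b * cos t + c * sin t := by
  obtain ⟨a, b, c, hg1, hgcos, hgsin⟩ :=
    exists_sub_trigPoly_orthogonal (hf.intervalIntegrable_of_Icc two_pi_pos.le)
  set g := fun t ↦ f t - (a + b * cos t + c * sin t)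
  have hg : ContinuousOn g (Icc 0 (2 * π)) := by fun_prop
  have hgi := hg.intervalIntegrable_of_Icc (μ := volume) two_pi_pos.le
  have hg2i : IntervalIntegrable (fun t ↦ g t ^ 2) volume 0 (2 * π) :=
    (hg.pow 2).intervalIntegrable_of_Icc two_pi_pos.le
  have hgf : ∫ t in 0..2 * π, g t * f t = ∫ t in 0..2 * π, g t ^ 2 := by
    calc ∫ t in 0..2 * π, g t * f t
        = ∫ t in 0..2 * π, (g t ^ 2 + g t * (a + b * cos t + c * sin t)) := by
          congr 1 with t
          simp only [g]
          ring
      _ = ∫ t in 0..2 * π, g t ^ 2 := by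
          rw [integral_add hg2i (hgi.mul_continuousOn (by fun_prop)), integral_mul_trigPoly hgi,
            hg1, hgcos, hgsin]
          ring
  have hg0 := eq_zero_of_integral_nonpos two_pi_pos (hg.pow 2) (fun t _ ↦ sq_nonneg (g t))
    (hgf ▸ h g hg hg1 hgcos hgsin)
  exact ⟨a, b, c, fun t ht ↦ sub_eq_zero.1 (pow_eq_zero_iff two_ne_zero |>.1 (hg0 t ht))⟩

theorem exists_eq_const_of_forall_feasible_le {r₀ r : ℝ → ℝ} {a b c : ℝ} (ha : 0 < a)
    (hP : ∀ t ∈ Icc 0 (2 * π), 1 / r₀ t = a + b * cos t + c * sin t) (hr : Feasible r)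
    (hmin : ∀ s, Feasible s →
      ∫ t in 0..2 * π, r t ^ 3 / r₀ t ≤ ∫ t in 0..2 * π, s t ^ 3 / r₀ t) :
    ∃ k : ℝ, ∀ t ∈ Icc 0 (2 * π), r t = k := by
  have hobj : ∀ s, Feasible s → ∫ t in 0..2 * π, s t ^ 3 / r₀ t = a * ∫ t in 0..2 * π, s t ^ 3 :=
    fun s hs ↦ by
      rw [← hs.integral_mul_trigPoly a b c]
      exact integral_congr_Icc two_pi_pos.le fun t ht ↦ by rw [← hP t ht, mul_one_div]
  set k := (√π)⁻¹
  have hk : 0 < k := by positivity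
  have hπk : π * k ^ 2 = 1 := by rw [inv_pow, sq_sqrt pi_pos.le, mul_inv_cancel₀ pi_ne_zero]
  have hconst := hmin _ (feasible_const hk hπk)
  rw [hobj r hr, hobj _ (feasible_const hk hπk), integral_const, smul_eq_mul] at hconst
  refine ⟨k, eq_const_of_integral_cube_le two_pi_pos hr.1 (fun t ht ↦ (hr.2.1 t ht).le) hk ?_ ?_⟩
  · linear_combination 2 * hr.2.2.1 - 2 * hπk
  · simpa using le_of_mul_le_mul_left hconst ha

theorem exists_inv_eq_trigPoly_of_eq_const {r₀ r : ℝ → ℝ} {k : ℝ}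
    (hr₀ : ContinuousOn r₀ (Icc 0 (2 * π))) (hr₀0 : ∀ t ∈ Icc 0 (2 * π), 0 < r₀ t)
    (hr : Feasible r) (hmin : ∀ s, Feasible s →
      ∫ t in 0..2 * π, r t ^ 3 / r₀ t ≤ ∫ t in 0..2 * π, s t ^ 3 / r₀ t)
    (hk : ∀ t ∈ Icc 0 (2 * π), r t = k) :
    ∃ a b c : ℝ, 0 < a ∧ ∀ t ∈ Icc 0 (2 * π), 1 / r₀ t = a + b * cos t + c * sin t := by
  have hf : ContinuousOn (fun t ↦ 1 / r₀ t) (Icc 0 (2 * π)) :=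
    continuousOn_const.div hr₀ fun t ht ↦ (hr₀0 t ht).ne'
  have hf0 : ∀ t ∈ Icc 0 (2 * π), 0 < 1 / r₀ t := fun t ht ↦ one_div_pos.2 (hr₀0 t ht)
  obtain ⟨hk0, hπk⟩ := hr.pos_and_pi_mul_sq_of_eq_const hk
  have hobj : ∫ t in 0..2 * π, r t ^ 3 / r₀ t = ∫ t in 0..2 * π, k ^ 3 * (1 / r₀ t) :=
    integral_congr_Icc two_pi_pos.le fun t ht ↦ by rw [hk t ht, mul_one_div]
  obtain ⟨a, b, c, hP⟩ := exists_eq_trigPoly_of_forall_orthogonal hf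
    fun g hg hg1 hgcos hgsin ↦ integral_mul_nonpos_of_forall_feasible_le hf hf0 hk0 hπk
      (fun s hs ↦ by rw [← hobj]; simpa only [mul_one_div] using hmin s hs) hg hg1 hgcos hgsin
  have hA := intervalIntegral_pos_of_pos_on (hf.intervalIntegrable_of_Icc two_pi_pos.le)
    (fun t ht ↦ hf0 t (Ioo_subset_Icc_self ht)) two_pi_pos
  rw [integral_congr_Icc two_pi_pos.le hP, integral_trigPoly] at hA
  exact ⟨a, b, c, pos_of_mul_pos_right hA two_pi_pos.le, hP⟩

theorem stmt14_general (r₀ : ℝ → ℝ)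
    (hr₀c : ContinuousOn r₀ (Icc 0 (2 * π))) (hr₀pos : ∀ t ∈ Icc (0 : ℝ) (2 * π), 0 < r₀ t)
    (r : ℝ → ℝ) (hfeas : Feasible r)
    (hmin : ∀ s : ℝ → ℝ, Feasible s →
      (∫ t in (0 : ℝ)..(2 * π), r t ^ 3 / r₀ t) ≤ ∫ t in (0 : ℝ)..(2 * π), s t ^ 3 / r₀ t) :
    (∃ k : ℝ, ∀ t ∈ Icc (0 : ℝ) (2 * π), r t = k) ↔
    (∃ a b c : ℝ, 0 < a ∧ ∀ t ∈ Icc (0 : ℝ) (2 * π),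
      1 / r₀ t = a + b * Real.cos t + c * Real.sin t) := by
  constructor
  · rintro ⟨k, hk⟩
    exact exists_inv_eq_trigPoly_of_eq_const hr₀c hr₀pos hfeas hmin hk
  · rintro ⟨a, b, c, ha, hP⟩
    exact exists_eq_const_of_forall_feasible_le ha hP hfeas hmin

theorem stmt14 (r₀ : ℝ → ℝ)
    (hr₀c : ContinuousOn r₀ (Icc 0 (2 * π))) (hr₀pos : ∀ t ∈ Icc (0 : ℝ) (2 * π), 0 < r₀ t)
    (hper : r₀ 0 = r₀ (2 * π)) (hconv : Convex ℝ (StarSet r₀))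
    (r : ℝ → ℝ) (hfeas : Feasible r)
    (hmin : ∀ s : ℝ → ℝ, Feasible s →
      (∫ t in (0 : ℝ)..(2 * π), r t ^ 3 / r₀ t) ≤ ∫ t in (0 : ℝ)..(2 * π), s t ^ 3 / r₀ t) :
    (∃ k : ℝ, ∀ t ∈ Icc (0 : ℝ) (2 * π), r t = k) ↔
    (∃ a b c : ℝ, 0 < a ∧ ∀ t ∈ Icc (0 : ℝ) (2 * π),
      1 / r₀ t = a + b * Real.cos t + c * Real.sin t) :=
  stmt14_general r₀ hr₀c hr₀pos r hfeas hmin
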